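/- arXiv:math/0303346 — 5 statements merged into one kernel-verified Lean document; each statement's English description precedes it below -/
import Mathlib

section
/- For λ, μ ∈ ℂ, the Lie algebras r_λ and r_μ are isomorphic as complex Lie algebras if and only if μ = λ or λμ = 1. -/
noncomputable section

/-- The underlying vector space `ℂ³`. -/
abbrev E3 : Type := Fin 3 → ℂ

/-- The standard basis vectors of `ℂ³`. -/
def e1 : E3 := ![1, 0, 0]
def e2 : E3 := ![0, 1, 0]

/-- The unique antisymmetric bilinear bracket on `ℂ³` with `[e₁,e₂] = c12`,
`[e₁,e₃] = c13`, `[e₂,e₃] = c23`. -/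
def br (c12 c13 c23 : E3) (u v : E3) : E3 :=
  (u 0 * v 1 - u 1 * v 0) • c12 + (u 0 * v 2 - u 2 * v 0) • c13 +
    (u 1 * v 2 - u 2 * v 1) • c23

def sw (t : ℂ) : E3 →ₗ[ℂ] E3 where
  toFun v := ![v 1, v 0, t * v 2]
  map_add' u v := by funext i; fin_cases i <;> simp <;> ring
  map_smul' c v := by funext i; fin_cases i <;> simp <;> ring

lemma sw_apply (t : ℂ) (v : E3) : sw t v = ![v 1, v 0, t * v 2] := rfl

/-- For `λ, μ ∈ ℂ`, the Lie algebras `r_λ` (with `[e₁,e₃]=e₁`, `[e₂,e₃]=λe₂`) and `r_μ`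
are isomorphic as complex Lie algebras if and only if `μ = λ` or `λμ = 1`. -/
theorem r_lambda_iso_r_mu_iff (lam mu : ℂ) :
    (∃ g : E3 ≃ₗ[ℂ] E3, ∀ u v : E3,
        g (br 0 e1 (lam • e2) u v) = br 0 e1 (mu • e2) (g u) (g v)) ↔
      (mu = lam ∨ lam * mu = 1) := by
  constructor
  · rintro ⟨g, hg⟩
    -- key bracket values
    have key1 : br 0 e1 (lam • e2) e1 ![0,0,1] = e1 := by
      funext i; fin_cases i <;> simp [br, e1, e2]
    have key2 : br 0 e1 (lam • e2) e2 ![0,0,1] = lam • e2 := by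
      funext i; fin_cases i <;> simp [br, e1, e2]
    have key3 : br 0 e1 (lam • e2) e1 e2 = 0 := by
      funext i; fin_cases i <;> simp [br, e1, e2]
    have H1 := hg e1 ![0,0,1]
    have H2 := hg e2 ![0,0,1]
    have H3 := hg e1 e2
    rw [key1] at H1
    rw [key2, map_smul] at H2
    rw [key3, map_zero] at H3
    set A := g e1 with hA
    set B := g e2 with hB
    set P := g (![0,0,1] : E3) with hP
    -- coordinate equations
    have e12 : A 2 = 0 := by
      have := congrFun H1 2
      simpa [br, e1, e2] using this
    have e10 : A 0 = A 0 * P 2 - A 2 * P 0 := by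
      have := congrFun H1 0
      simpa [br, e1, e2] using this
    have e11 : A 1 = mu * (A 1 * P 2 - A 2 * P 1) := by
      have h' := congrFun H1 1
      simp [br, e1, e2] at h'
      linear_combination h'
    have e22 : lam * B 2 = 0 := by
      have := congrFun H2 2
      simpa [br, e1, e2] using this
    have e20 : lam * B 0 = B 0 * P 2 - B 2 * P 0 := by
      have := congrFun H2 0
      simpa [br, e1, e2] using this
    have e21 : lam * B 1 = mu * (B 1 * P 2 - B 2 * P 1) := by
      have h' := congrFun H2 1
      simp [br, e1, e2] at h'
      linear_combination h'
    have e30 : A 0 * B 2 - A 2 * B 0 = 0 := by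
      have := congrFun H3.symm 0
      simpa [br, e1, e2] using this
    have e31 : mu * (A 1 * B 2 - A 2 * B 1) = 0 := by
      have h' := congrFun H3.symm 1
      simp [br, e1, e2, -mul_eq_zero] at h'
      linear_combination h'
    -- nonvanishing of g e1, g e2
    have hAne : ¬ (A 0 = 0 ∧ A 1 = 0) := by
      rintro ⟨h0, h1⟩
      have : e1 = 0 := by
        apply g.map_eq_zero_iff.mp
        rw [← hA]; funext i; fin_cases i <;> simp [h0, h1, e12]
      have := congrFun this 0
      simp [e1] at this
    have hBne : ¬ (B 0 = 0 ∧ B 1 = 0 ∧ B 2 = 0) := by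
      rintro ⟨h0, h1, h2⟩
      have : e2 = 0 := by
        apply g.map_eq_zero_iff.mp
        rw [← hB]; funext i; fin_cases i <;> simp [h0, h1, h2]
      have := congrFun this 1
      simp [e2] at this
    by_cases hlam : lam = 0
    · -- show mu = 0
      subst hlam
      left
      by_contra hmu
      -- from equations derive B = 0
      simp only [zero_mul] at e20 e21 e22
      rw [e12] at e10 e11 e30 e31
      simp only [zero_mul, sub_zero] at e10 e11 e30 e31
      rcases (not_and_or.mp hAne) with ha | hb
      · -- A 0 ≠ 0
        have hr : P 2 = 1 := by
          have hz : A 0 * (P 2 - 1) = 0 := by linear_combination -e10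
          rcases mul_eq_zero.mp hz with h | h
          · exact absurd h ha
          · linear_combination h
        have hf : B 2 = 0 := by
          rcases mul_eq_zero.mp e30 with h | h
          · exact absurd h ha
          · exact h
        apply hBne
        refine ⟨?_, ?_, hf⟩
        · linear_combination -e20 - B 0 * hr + P 0 * hf
        · have hz : mu * B 1 = 0 := by
            linear_combination -e21 - mu * B 1 * hr + mu * P 1 * hf
          rcases mul_eq_zero.mp hz with h | h
          · exact absurd h hmu
          · exact h
      · -- A 1 ≠ 0
        have ha1 : A 1 ≠ 0 := hb
        have hr : mu * P 2 = 1 := by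
          have hz : A 1 * (mu * P 2 - 1) = 0 := by linear_combination -e11
          rcases mul_eq_zero.mp hz with h | h
          · exact absurd h ha1
          · linear_combination h
        have hrne : P 2 ≠ 0 := by
          intro h; rw [h, mul_zero] at hr; exact zero_ne_one hr
        have hf : B 2 = 0 := by
          have : mu * (A 1 * B 2) = 0 := by linear_combination e31
          rcases mul_eq_zero.mp this with h | h
          · exact absurd h hmu
          · rcases mul_eq_zero.mp h with h' | h'
            · exact absurd h' ha1
            · exact h'
        apply hBne
        refine ⟨?_, ?_, hf⟩
        · have hz : B 0 * P 2 = 0 := by linear_combination -e20 + P 0 * hf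
          rcases mul_eq_zero.mp hz with h | h
          · exact h
          · exact absurd h hrne
        · have hz : mu * (B 1 * P 2) = 0 := by linear_combination -e21 + mu * P 1 * hf
          rcases mul_eq_zero.mp hz with h | h
          · exact absurd h hmu
          · rcases mul_eq_zero.mp h with h' | h'
            · exact h'
            · exact absurd h' hrne
    · -- lam ≠ 0 case
      have hf : B 2 = 0 := by
        rcases mul_eq_zero.mp e22 with h | h
        · exact absurd h hlam
        · exact h
      rw [e12] at e10 e11
      rw [hf] at e20 e21
      simp only [mul_zero, sub_zero, zero_mul] at e10 e11 e20 e21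
      -- determinant nonzero
      have hdet : A 0 * B 1 - A 1 * B 0 ≠ 0 := by
        intro hd
        have h1 : B 1 • e1 - A 1 • e2 = 0 := by
          apply g.injective
          rw [map_sub, map_smul, map_smul, ← hA, ← hB, map_zero]
          funext i; fin_cases i
          · show B 1 * A 0 - A 1 * B 0 = 0
            linear_combination hd
          · show B 1 * A 1 - A 1 * B 1 = 0
            ring
          · show B 1 * A 2 - A 1 * B 2 = 0
            linear_combination B 1 * e12 - A 1 * hf
        have h2 : B 0 • e1 - A 0 • e2 = 0 := by
          apply g.injective
          rw [map_sub, map_smul, map_smul, ← hA, ← hB, map_zero]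
          funext i; fin_cases i
          · show B 0 * A 0 - A 0 * B 0 = 0
            ring
          · show B 0 * A 1 - A 0 * B 1 = 0
            linear_combination -hd
          · show B 0 * A 2 - A 0 * B 2 = 0
            linear_combination B 0 * e12 - A 0 * hf
        have hb1 : B 1 = 0 := by simpa [e1, e2] using congrFun h1 0
        have ha1 : A 1 = 0 := by
          have h' := congrFun h1 1; simp [e1, e2] at h'; linear_combination h'
        have hb0 : B 0 = 0 := by simpa [e1, e2] using congrFun h2 0
        have ha0 : A 0 = 0 := by
          have h' := congrFun h2 1; simp [e1, e2] at h'; linear_combination h'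
        exact hAne ⟨ha0, ha1⟩
      by_cases ha : A 0 = 0
      · -- then A 1 ≠ 0, B 0 ≠ 0, get lam * mu = 1
        right
        have ha1 : A 1 ≠ 0 := fun h => hAne ⟨ha, h⟩
        have hb0 : B 0 ≠ 0 := by
          intro h
          apply hdet
          rw [ha, h]; ring
        have hr : P 2 = lam := by
          have : B 0 * (P 2 - lam) = 0 := by linear_combination -e20
          rcases mul_eq_zero.mp this with h | h
          · exact absurd h hb0
          · linear_combination h
        have : A 1 * (mu * lam - 1) = 0 := by
          rw [← hr]; linear_combination -e11
        rcases mul_eq_zero.mp this with h | h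
        · exact absurd h ha1
        · linear_combination h
      · -- A 0 ≠ 0 ⇒ P 2 = 1
        have hr : P 2 = 1 := by
          have : A 0 * (P 2 - 1) = 0 := by linear_combination -e10
          rcases mul_eq_zero.mp this with h | h
          · exact absurd h ha
          · linear_combination h
        rw [hr] at e11 e20 e21
        simp only [mul_one] at e11 e20 e21
        by_cases hd : B 1 = 0
        · -- B 0 ≠ 0 and A 1 ≠ 0
          left
          have hb0 : B 0 ≠ 0 := by
            intro h; apply hdet; rw [hd, h]; ring
          have ha1 : A 1 ≠ 0 := by
            intro h; apply hdet; rw [hd, h]; ring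
          have hl1 : lam = 1 := by
            have : B 0 * (lam - 1) = 0 := by linear_combination e20
            rcases mul_eq_zero.mp this with h | h
            · exact absurd h hb0
            · linear_combination h
          have hm1 : mu = 1 := by
            have : A 1 * (mu - 1) = 0 := by linear_combination -e11
            rcases mul_eq_zero.mp this with h | h
            · exact absurd h ha1
            · linear_combination h
          rw [hl1, hm1]
        · left
          have : B 1 * (mu - lam) = 0 := by linear_combination -e21
          rcases mul_eq_zero.mp this with h | h
          · exact absurd h hd
          · linear_combination h
  · rintro (rfl | h)
    · exact ⟨LinearEquiv.refl ℂ E3, fun u v => rfl⟩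
    · have hlam : lam ≠ 0 := by
        intro h0; rw [h0, zero_mul] at h; exact zero_ne_one h
      refine ⟨LinearEquiv.ofLinear (sw lam) (sw mu) ?_ ?_, ?_⟩
      · apply LinearMap.ext; intro v
        funext i; fin_cases i <;> simp [sw_apply] <;> linear_combination v 2 * h
      · apply LinearMap.ext; intro v
        funext i; fin_cases i <;> simp [sw_apply] <;> linear_combination v 2 * h
      · intro u v
        funext i
        fin_cases i <;>
          simp [sw_apply, br, e1, e2] <;>
          ring_nf <;>
          linear_combination -(u 0 * v 2 - u 2 * v 0) * h
end
end

section
/- Let a₁,…,a₉ ∈ ℂ and let [·,·] be the antisymmetric bilinear bracket on ℂ³ with [e₁,e₂]=a₁e₁+a₂e₂+a₃e₃, [e₁,e₃]=a₄e₁+a₅e₂+a₆e₃, [e₂,e₃]=a₇e₁+a₈e₂+a₉e₃. Then [·,·] satisfies the Jacobi identity if and only if A·(x,y,z)ᵀ = 0, where A is the 3×3 matrix with rows (a₁,a₂,a₃), (a₄,a₅,a₆), (a₇,a₈,a₉) and x = a₂+a₆, y = a₉−a₁, z = −(a₄+a₈). -/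
noncomputable section

/-- The Jacobi identity for a bracket. -/
def Jacobi (b : E3 → E3 → E3) : Prop :=
  ∀ u v w : E3, b (b u v) w + b (b v w) u + b (b w u) v = 0

set_option maxHeartbeats 4000000

lemma br_apply (c12 c13 c23 u v : E3) (i : Fin 3) :
    br c12 c13 c23 u v i =
      (u 0 * v 1 - u 1 * v 0) * c12 i + (u 0 * v 2 - u 2 * v 0) * c13 i +
        (u 1 * v 2 - u 2 * v 1) * c23 i := rfl

/-- The bracket with `[e₁,e₂]=a₁e₁+a₂e₂+a₃e₃`, `[e₁,e₃]=a₄e₁+a₅e₂+a₆e₃`,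
`[e₂,e₃]=a₇e₁+a₈e₂+a₉e₃` satisfies the Jacobi identity if and only if
`A·(x,y,z)ᵀ = 0`, where `A` is the matrix of structure constants,
`x = a₂+a₆`, `y = a₉−a₁`, `z = −(a₄+a₈)`. -/
theorem jacobi_iff_matrix_kernel (a1 a2 a3 a4 a5 a6 a7 a8 a9 : ℂ) :
    Jacobi (br ![a1, a2, a3] ![a4, a5, a6] ![a7, a8, a9]) ↔
      Matrix.mulVec (!![a1, a2, a3; a4, a5, a6; a7, a8, a9])
        ![a2 + a6, a9 - a1, -(a4 + a8)] = 0 := by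
  constructor
  · intro hJ
    have h := hJ ![1,0,0] ![0,1,0] ![0,0,1]
    have h0 := congrFun h 0
    have h1 := congrFun h 1
    have h2 := congrFun h 2
    simp only [Pi.add_apply, br_apply, Matrix.cons_val_zero, Matrix.cons_val_one,
      Matrix.head_cons, Matrix.cons_val_two, Matrix.tail_cons, Pi.zero_apply] at h0 h1 h2
    funext i
    fin_cases i <;>
      simp [Matrix.mulVec, dotProduct, Fin.sum_univ_three]
    · linear_combination h2
    · linear_combination -h1
    · linear_combination h0
  · intro h u v w
    have h0 := congrFun h 0
    have h1 := congrFun h 1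
    have h2 := congrFun h 2
    simp only [Matrix.mulVec, dotProduct, Fin.sum_univ_three, Matrix.cons_val',
      Matrix.cons_val_zero, Matrix.cons_val_one, Matrix.head_cons, Matrix.cons_val_two,
      Matrix.tail_cons, Matrix.empty_val', Matrix.cons_val_fin_one, Matrix.head_fin_const,
      Matrix.of_apply, Pi.zero_apply] at h0 h1 h2
    funext i
    fin_cases i <;>
      simp [br_apply]
    · linear_combination (u 0 * (v 1 * w 2 - v 2 * w 1) - u 1 * (v 0 * w 2 - v 2 * w 0)
        + u 2 * (v 0 * w 1 - v 1 * w 0)) * h2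
    · linear_combination (-(u 0 * (v 1 * w 2 - v 2 * w 1) - u 1 * (v 0 * w 2 - v 2 * w 0)
        + u 2 * (v 0 * w 1 - v 1 * w 0))) * h1
    · linear_combination (u 0 * (v 1 * w 2 - v 2 * w 1) - u 1 * (v 0 * w 2 - v 2 * w 0)
        + u 2 * (v 0 * w 1 - v 1 * w 0)) * h0
end
end

section
/- Let a₁,…,a₉ ∈ ℂ and let [·,·] be the antisymmetric bilinear bracket on ℂ³ with [e₁,e₂]=a₁e₁+a₂e₂+a₃e₃, [e₁,e₃]=a₄e₁+a₅e₂+a₆e₃, [e₂,e₃]=a₇e₁+a₈e₂+a₉e₃, and let A be the 3×3 matrix with rows (a₁,a₂,a₃), (a₄,a₅,a₆), (a₇,a₈,a₉). If [·,·] satisfies the Jacobi identity and det A ≠ 0, then a₆ = −a₂, a₉ = a₁, and a₈ = −a₄. -/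
noncomputable section

set_option maxHeartbeats 2000000 in
/-- If the bracket with `[e₁,e₂]=a₁e₁+a₂e₂+a₃e₃`, `[e₁,e₃]=a₄e₁+a₅e₂+a₆e₃`,
`[e₂,e₃]=a₇e₁+a₈e₂+a₉e₃` satisfies the Jacobi identity and the matrix `A` of structure
constants has nonzero determinant, then `a₆ = −a₂`, `a₉ = a₁` and `a₈ = −a₄`. -/
theorem jacobi_det_ne_zero (a1 a2 a3 a4 a5 a6 a7 a8 a9 : ℂ)
    (hJ : Jacobi (br ![a1, a2, a3] ![a4, a5, a6] ![a7, a8, a9]))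
    (hdet : (!![a1, a2, a3; a4, a5, a6; a7, a8, a9]).det ≠ 0) :
    a6 = -a2 ∧ a9 = a1 ∧ a8 = -a4 := by
  have h := hJ ![1,0,0] ![0,1,0] ![0,0,1]
  simp only [br] at h
  have h0 := congrFun h 0
  have h1 := congrFun h 1
  have h2 := congrFun h 2
  clear h hJ
  simp at h0
  simp at h1
  simp at h2
  have hv : Matrix.vecMul ![-(a4+a8), a1-a9, a2+a6]
      (!![a1, a2, a3; a4, a5, a6; a7, a8, a9]) = 0 := by
    funext i
    fin_cases i <;>
      simp [Matrix.vecMul, dotProduct, Fin.sum_univ_succ]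
    · linear_combination h0
    · linear_combination h1
    · linear_combination h2
  haveI : Invertible (!![a1, a2, a3; a4, a5, a6; a7, a8, a9]) :=
    Matrix.invertibleOfIsUnitDet _ (isUnit_iff_ne_zero.mpr hdet)
  have hz : ![-(a4+a8), a1-a9, a2+a6] = 0 := by
    have h' := congrArg (fun v => Matrix.vecMul v (⅟(!![a1, a2, a3; a4, a5, a6; a7, a8, a9]))) hv
    simp only [Matrix.vecMul_vecMul, mul_invOf_self, Matrix.vecMul_one,
      Matrix.zero_vecMul] at h'
    exact h'
  have e0 := congrFun hz 0
  have e1 := congrFun hz 1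
  have e2 := congrFun hz 2
  simp at e0 e1 e2
  refine ⟨?_, ?_, ?_⟩
  · linear_combination e2
  · linear_combination -e1
  · linear_combination -e0
end
end

section
/- For every λ ∈ ℂ with λ ≠ 0, the complex Lie algebra on ℂ³ with brackets [e₁,e₃] = λe₁ + e₂, [e₂,e₃] = λe₂ (all other basis brackets zero) is isomorphic to the Lie algebra g₂ on ℂ³ with brackets [e₁,e₃] = e₁ + e₂, [e₂,e₃] = e₂ (all other basis brackets zero). -/
noncomputable section

/-! On `span {e₁, e₂}` the map `[·, e₃]` is `λ + N` with `N` nilpotent. Passing to the basis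
`e₁, e₂/λ, e₃/λ` normalises it to `1 + N`, so `diag(1, λ, λ)` is an isomorphism onto `g₂`. -/

def diagEquiv (d : Fin 3 → ℂˣ) : E3 ≃ₗ[ℂ] E3 :=
  LinearEquiv.piCongrRight fun i => LinearEquiv.smulOfUnit (d i)

@[simp]
lemma diagEquiv_apply (d : Fin 3 → ℂˣ) (u : E3) (i : Fin 3) :
    diagEquiv d u i = d i * u i :=
  rfl

lemma map_br (f : E3 →ₗ[ℂ] E3) (c12 c13 c23 u v : E3) :
    f (br c12 c13 c23 u v) = br (f c12) (f c13) (f c23) u v := by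
  simp only [br, map_add, map_smul]

lemma br_diagEquiv (d : Fin 3 → ℂˣ) (c12 c13 c23 u v : E3) :
    br c12 c13 c23 (diagEquiv d u) (diagEquiv d v) =
      br ((d 0 * d 1 : ℂ) • c12) ((d 0 * d 2 : ℂ) • c13) ((d 1 * d 2 : ℂ) • c23) u v := by
  simp only [br, diagEquiv_apply, smul_smul]
  congr 2 <;> congr 1 <;> ring

/-- For every `λ ≠ 0`, the Lie algebra with `[e₁,e₃] = λe₁ + e₂`, `[e₂,e₃] = λe₂`
is isomorphic to the Lie algebra `g₂` with `[e₁,e₃] = e₁ + e₂`, `[e₂,e₃] = e₂`. -/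
theorem defective_matrix_algebra_iso_g2 (lam : ℂ) (hlam : lam ≠ 0) :
    ∃ g : E3 ≃ₗ[ℂ] E3, ∀ u v : E3,
      g (br 0 (lam • e1 + e2) (lam • e2) u v) = br 0 (e1 + e2) e2 (g u) (g v) := by
  set μ := Units.mk0 lam hlam
  refine ⟨diagEquiv ![1, μ, μ], fun u v => ?_⟩
  rw [br_diagEquiv, ← LinearEquiv.coe_coe, map_br]
  congr 1 <;> ext i <;> fin_cases i <;> simp [μ, e1, e2]
end
end

section
/- Let g₂ be the complex Lie algebra on ℂ³ with brackets [e₁,e₃]=e₁+e₂, [e₂,e₃]=e₂ (all other basis brackets zero). Then the space of derivations of g₂ has dimension 4 over ℂ. -/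
noncomputable section

/-- `f : ℂ³ → ℂ³` is ℂ-linear. -/
def IsLin (f : E3 → E3) : Prop :=
  ∀ (a : ℂ) (x y : E3), f (a • x + y) = a • f x + f y

/-- `f` is a derivation of the bracket `b`. -/
def IsDeriv (b : E3 → E3 → E3) (f : E3 → E3) : Prop :=
  IsLin f ∧ ∀ x y : E3, f (b x y) = b (f x) y + b x (f y)

/-- The space of derivations of the bracket `b`.  (The set of derivations is already a
ℂ-subspace, so taking its span does not change it.) -/
def DerSpace (b : E3 → E3 → E3) : Submodule ℂ (E3 → E3) :=
  Submodule.span ℂ {f : E3 → E3 | IsDeriv b f}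

def e3' : E3 := ![0, 0, 1]

lemma e1_0 : e1 0 = 1 := rfl
lemma e1_1 : e1 1 = 0 := rfl
lemma e1_2 : e1 2 = 0 := rfl
lemma e2_0 : e2 0 = 0 := rfl
lemma e2_1 : e2 1 = 1 := rfl
lemma e2_2 : e2 2 = 0 := rfl
lemma e3_0 : e3' 0 = 0 := rfl
lemma e3_1 : e3' 1 = 0 := rfl
lemma e3_2 : e3' 2 = 1 := rfl

/-- A basis of the derivation space of `g₂`. -/
def D : Fin 4 → (E3 → E3) :=
  ![fun x => ![x 0, x 1, 0],
    fun x => ![0, x 0, 0],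
    fun x => ![x 2, 0, 0],
    fun x => ![0, x 2, 0]]

lemma D_deriv (i : Fin 4) : IsDeriv (br 0 (e1 + e2) e2) (D i) := by
  constructor
  · intro a x y
    fin_cases i <;> (funext j; fin_cases j <;>
      simp [D, Matrix.vecHead, Matrix.vecTail, Pi.add_apply, Pi.smul_apply, smul_eq_mul])
  · intro x y
    fin_cases i <;> (funext j; fin_cases j <;>
      (simp [D, br, e1, e2, Matrix.vecHead, Matrix.vecTail, Pi.add_apply, Pi.smul_apply,
        smul_eq_mul]; try ring))

lemma D_indep : LinearIndependent ℂ D := by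
  rw [Fintype.linearIndependent_iff]
  intro g hg i
  have h1 := congrFun (congrFun hg e1) 0
  have h2 := congrFun (congrFun hg e1) 1
  have h3 := congrFun (congrFun hg e3') 0
  have h4 := congrFun (congrFun hg e3') 1
  simp [Fin.sum_univ_four, D, e1, e3', Matrix.vecHead, Matrix.vecTail] at h1 h2 h3 h4
  fin_cases i <;> simp [h1, h2, h3, h4]

lemma deriv_mem_span {f : E3 → E3} (hf : IsDeriv (br 0 (e1 + e2) e2) f) :
    f ∈ Submodule.span ℂ (Set.range D) := by
  obtain ⟨hlin, hder⟩ := hf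
  have hf0 : f 0 = 0 := by
    have h := hlin 1 0 0
    simpa using h
  -- f on a general vector
  have hrep : ∀ x : E3, f x = x 0 • f e1 + x 1 • f e2 + x 2 • f e3' := by
    intro x
    have hx : (x 0 • e1 + (x 1 • e2 + (x 2 • e3' + 0)) : E3) = x := by
      funext j; fin_cases j <;> simp [e1, e2, e3']
    calc f x = f (x 0 • e1 + (x 1 • e2 + (x 2 • e3' + 0))) := by rw [hx]
    _ = x 0 • f e1 + (x 1 • f e2 + (x 2 • f e3' + f 0)) := by rw [hlin, hlin, hlin]
    _ = x 0 • f e1 + x 1 • f e2 + x 2 • f e3' := by rw [hf0]; abel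
  -- bracket values
  have hb12 : br 0 (e1 + e2) e2 e1 e2 = 0 := by
    funext j; fin_cases j <;> simp [br, e1, e2, Matrix.vecHead, Matrix.vecTail]
  have hb13 : br 0 (e1 + e2) e2 e1 e3' = e1 + e2 := by
    funext j; fin_cases j <;> simp [br, e1, e2, e3', Matrix.vecHead, Matrix.vecTail]
  have hb23 : br 0 (e1 + e2) e2 e2 e3' = e2 := by
    funext j; fin_cases j <;> simp [br, e1, e2, e3', Matrix.vecHead, Matrix.vecTail]
  have h12 := hder e1 e2
  have h13 := hder e1 e3'
  have h23 := hder e2 e3'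
  rw [hb12, hf0] at h12
  rw [hb13] at h13
  rw [hb23] at h23
  have hfe12 : f (e1 + e2) = f e1 + f e2 := by
    have := hlin 1 e1 e2; simpa using this
  rw [hfe12] at h13
  -- scalar equations
  have q1 := congrFun h12 0
  have q2 := congrFun h12 1
  have q3 := congrFun h13 0
  have q4 := congrFun h13 1
  have q7 := congrFun h23 1
  simp only [br, e1_0, e1_1, e1_2, e2_0, e2_1, e2_2, e3_0, e3_1, e3_2, Pi.add_apply,
    Pi.smul_apply, Pi.zero_apply, smul_eq_mul] at q1 q2 q3 q4 q7
  ring_nf at q1 q2 q3 q4 q7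
  -- derived constraints
  have hv2 : f e1 2 = 0 := by linear_combination q2 - q1
  have hw2 : f e2 2 = 0 := by linear_combination -q1
  have hu2 : f e3' 2 = 0 := by linear_combination (-q3 - q7) / 2
  have hw0 : f e2 0 = 0 := by linear_combination q3 + hu2
  have hw1 : f e2 1 = f e1 0 := by linear_combination q4 + hu2
  -- f is the explicit combination
  have hcomb : f = f e1 0 • D 0 + f e1 1 • D 1 + f e3' 0 • D 2 + f e3' 1 • D 3 := by
    funext x
    rw [hrep x]
    funext j
    fin_cases j <;>
      simp [D, Matrix.vecHead, Matrix.vecTail, Pi.add_apply, Pi.smul_apply, smul_eq_mul,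
        hv2, hw2, hu2, hw0, hw1] <;> ring
  rw [hcomb]
  have hmem : ∀ i : Fin 4, D i ∈ Submodule.span ℂ (Set.range D) := fun i =>
    Submodule.subset_span (Set.mem_range_self i)
  exact Submodule.add_mem _ (Submodule.add_mem _ (Submodule.add_mem _
    (Submodule.smul_mem _ _ (hmem 0)) (Submodule.smul_mem _ _ (hmem 1)))
    (Submodule.smul_mem _ _ (hmem 2))) (Submodule.smul_mem _ _ (hmem 3))

lemma derspace_eq : DerSpace (br 0 (e1 + e2) e2) = Submodule.span ℂ (Set.range D) := by
  apply le_antisymm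
  · rw [DerSpace, Submodule.span_le]
    intro f hf
    exact deriv_mem_span hf
  · rw [Submodule.span_le]
    rintro _ ⟨i, rfl⟩
    exact Submodule.subset_span (D_deriv i)

/-- For the Lie algebra `g₂` with `[e₁,e₃]=e₁+e₂`, `[e₂,e₃]=e₂`: the space of
derivations has dimension 4 over `ℂ`. -/
theorem g2_derivations_four_dimensional :
    Module.finrank ℂ (DerSpace (br 0 (e1 + e2) e2)) = 4 := by
  rw [derspace_eq, finrank_span_eq_card D_indep]
  simp
end
end
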